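/- For every record type ρ ∈ 𝕋_R there exist a finite set I of pairwise distinct labels and types σ_l (l ∈ I) such that ρ = ⟨l:σ_l | l ∈ I⟩; that is, every record type is equal (with respect to mutual subtyping) to an intersection of unary record types, so the type-merge constructor + is eliminable up to type equality. -/

import Mathlib

/-!
Record types having a normal form are closed under `∩`: take the union of the label lists and
intersect the field types on common labels. They are closed under `+` as well: `+` distributes
over `∩` in its left argument, which reduces merging to the case `⟨l:σ⟩ + ρ` with `ρ` in normal
form, and there the absorption and commutation axioms move `⟨l:σ⟩` past the fields of `ρ` until
it meets its own label or the empty record.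
-/

/-- Intersection and record types `𝕋`. Record types are the types satisfying `IsRec`. -/
inductive Ty where
  | const : Nat → Ty
  | omega : Ty
  | arrow : Ty → Ty → Ty
  | inter : Ty → Ty → Ty
  | empty : Ty
  | fld : Nat → Ty → Ty
  | merge : Ty → Ty → Ty
deriving DecidableEq

/-- The record types `𝕋_R ⊆ 𝕋`. -/
inductive IsRec : Ty → Prop where
  | empty : IsRec .empty
  | fld (l : Nat) (σ : Ty) : IsRec (.fld l σ)
  | merge {ρ₁ ρ₂ : Ty} : IsRec ρ₁ → IsRec ρ₂ → IsRec (.merge ρ₁ ρ₂)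
  | inter {ρ₁ ρ₂ : Ty} : IsRec ρ₁ → IsRec ρ₂ → IsRec (.inter ρ₁ ρ₂)

/-- Subtyping on `𝕋`: the least preorder satisfying the BCD axioms together with
the record and record-merge axioms. -/
inductive TySub : Ty → Ty → Prop where
  | refl (σ : Ty) : TySub σ σ
  | trans {σ τ υ : Ty} : TySub σ τ → TySub τ υ → TySub σ υ
  | le_omega (σ : Ty) : TySub σ .omega
  | omega_arrow : TySub .omega (.arrow .omega .omega)
  | inter_left (σ τ : Ty) : TySub (.inter σ τ) σ
  | inter_right (σ τ : Ty) : TySub (.inter σ τ) τ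
  | le_inter {σ τ₁ τ₂ : Ty} : TySub σ τ₁ → TySub σ τ₂ → TySub σ (.inter τ₁ τ₂)
  | arrow_inter (σ τ₁ τ₂ : Ty) :
      TySub (.inter (.arrow σ τ₁) (.arrow σ τ₂)) (.arrow σ (.inter τ₁ τ₂))
  | arrow_mono {σ₁ σ₂ τ₁ τ₂ : Ty} : TySub σ₂ σ₁ → TySub τ₁ τ₂ →
      TySub (.arrow σ₁ τ₁) (.arrow σ₂ τ₂)
  | fld_empty (l : Nat) (σ : Ty) : TySub (.fld l σ) .empty
  | fld_inter (l : Nat) (σ τ : Ty) :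
      TySub (.inter (.fld l σ) (.fld l τ)) (.fld l (.inter σ τ))
  | fld_mono {σ τ : Ty} (l : Nat) : TySub σ τ → TySub (.fld l σ) (.fld l τ)
  | merge_empty_r {ρ : Ty} : IsRec ρ → TySub (.merge ρ .empty) ρ
  | merge_empty_r' {ρ : Ty} : IsRec ρ → TySub ρ (.merge ρ .empty)
  | merge_empty_l {ρ : Ty} : IsRec ρ → TySub (.merge .empty ρ) ρ
  | merge_empty_l' {ρ : Ty} : IsRec ρ → TySub ρ (.merge .empty ρ)
  | merge_assoc {ρ₁ ρ₂ ρ₃ : Ty} : IsRec ρ₁ → IsRec ρ₂ → IsRec ρ₃ →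
      TySub (.merge (.merge ρ₁ ρ₂) ρ₃) (.merge ρ₁ (.merge ρ₂ ρ₃))
  | merge_assoc' {ρ₁ ρ₂ ρ₃ : Ty} : IsRec ρ₁ → IsRec ρ₂ → IsRec ρ₃ →
      TySub (.merge ρ₁ (.merge ρ₂ ρ₃)) (.merge (.merge ρ₁ ρ₂) ρ₃)
  | merge_inter {ρ₁ ρ₂ ρ₃ : Ty} : IsRec ρ₁ → IsRec ρ₂ → IsRec ρ₃ →
      TySub (.merge (.inter ρ₁ ρ₂) ρ₃) (.inter (.merge ρ₁ ρ₃) (.merge ρ₂ ρ₃))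
  | merge_inter' {ρ₁ ρ₂ ρ₃ : Ty} : IsRec ρ₁ → IsRec ρ₂ → IsRec ρ₃ →
      TySub (.inter (.merge ρ₁ ρ₃) (.merge ρ₂ ρ₃)) (.merge (.inter ρ₁ ρ₂) ρ₃)
  | fld_absorb {ρ : Ty} (l : Nat) (σ τ : Ty) : IsRec ρ →
      TySub (.merge (.fld l σ) (.inter (.fld l τ) ρ)) (.inter (.fld l τ) ρ)
  | fld_absorb' {ρ : Ty} (l : Nat) (σ τ : Ty) : IsRec ρ →
      TySub (.inter (.fld l τ) ρ) (.merge (.fld l σ) (.inter (.fld l τ) ρ))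
  | fld_comm {ρ : Ty} {l l' : Nat} (σ τ : Ty) : l ≠ l' → IsRec ρ →
      TySub (.merge (.fld l σ) (.inter (.fld l' τ) ρ))
          (.inter (.fld l' τ) (.merge (.fld l σ) ρ))
  | fld_comm' {ρ : Ty} {l l' : Nat} (σ τ : Ty) : l ≠ l' → IsRec ρ →
      TySub (.inter (.fld l' τ) (.merge (.fld l σ) ρ))
          (.merge (.fld l σ) (.inter (.fld l' τ) ρ))
  | merge_mono_l {ρ₁ ρ₂ ρ : Ty} : IsRec ρ₁ → IsRec ρ₂ → IsRec ρ →
      TySub ρ₁ ρ₂ → TySub (.merge ρ₁ ρ) (.merge ρ₂ ρ)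
  | merge_congr_r {ρ ρ₁ ρ₂ : Ty} : IsRec ρ → IsRec ρ₁ → IsRec ρ₂ →
      TySub ρ₁ ρ₂ → TySub ρ₂ ρ₁ → TySub (.merge ρ ρ₁) (.merge ρ ρ₂)

/-- Type equality: mutual subtyping. -/
def TyEq (σ τ : Ty) : Prop := TySub σ τ ∧ TySub τ σ
/-- `⟨l : σ_l | l ∈ I⟩`: the intersection of unary record types over a list of labels. -/
def recTy (σ : Nat → Ty) : List Nat → Ty
  | [] => .empty
  | [l] => .fld l (σ l)
  | l :: l' :: ls => .inter (.fld l (σ l)) (recTy σ (l' :: ls))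

theorem TySub.inter_mono {σ σ' τ τ' : Ty} (hσ : TySub σ σ') (hτ : TySub τ τ') :
    TySub (.inter σ τ) (.inter σ' τ') :=
  .le_inter ((TySub.inter_left σ τ).trans hσ) ((TySub.inter_right σ τ).trans hτ)

namespace TyEq

theorem refl (σ : Ty) : TyEq σ σ := ⟨.refl σ, .refl σ⟩

theorem symm {σ τ : Ty} (h : TyEq σ τ) : TyEq τ σ := ⟨h.2, h.1⟩

theorem trans {σ τ υ : Ty} (h₁ : TyEq σ τ) (h₂ : TyEq τ υ) : TyEq σ υ :=
  ⟨h₁.1.trans h₂.1, h₂.2.trans h₁.2⟩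

theorem inter {σ σ' τ τ' : Ty} (hσ : TyEq σ σ') (hτ : TyEq τ τ') :
    TyEq (.inter σ τ) (.inter σ' τ') :=
  ⟨hσ.1.inter_mono hτ.1, hσ.2.inter_mono hτ.2⟩

theorem merge {ρ₁ ρ₁' ρ₂ ρ₂' : Ty} (h₁ : IsRec ρ₁) (h₁' : IsRec ρ₁') (h₂ : IsRec ρ₂)
    (h₂' : IsRec ρ₂') (e₁ : TyEq ρ₁ ρ₁') (e₂ : TyEq ρ₂ ρ₂') :
    TyEq (.merge ρ₁ ρ₂) (.merge ρ₁' ρ₂') :=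
  ⟨(TySub.merge_mono_l h₁ h₁' h₂ e₁.1).trans (.merge_congr_r h₁' h₂ h₂' e₂.1 e₂.2),
    (TySub.merge_mono_l h₁' h₁ h₂' e₁.2).trans (.merge_congr_r h₁ h₂' h₂ e₂.2 e₂.1)⟩

end TyEq

section recTy

variable {σ τ : Nat → Ty}

theorem isRec_recTy (σ : Nat → Ty) : ∀ I, IsRec (recTy σ I)
  | [] => .empty
  | [l] => .fld l _
  | _ :: l' :: I => .inter (.fld _ _) (isRec_recTy σ (l' :: I))

theorem recTy_cons (σ : Nat → Ty) (l : Nat) (I : List Nat) :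
    TyEq (recTy σ (l :: I)) (.inter (.fld l (σ l)) (recTy σ I)) := by
  cases I with
  | nil => exact ⟨.le_inter (.refl _) (.fld_empty l _), .inter_left _ _⟩
  | cons l' I => exact .refl _

theorem recTy_le_fld {I : List Nat} {l : Nat} (hl : l ∈ I) :
    TySub (recTy σ I) (.fld l (σ l)) := by
  induction I with
  | nil => cases hl
  | cons a I ih =>
    refine (recTy_cons σ a I).1.trans ?_
    rcases List.mem_cons.mp hl with rfl | hl
    · exact .inter_left _ _
    · exact (TySub.inter_right _ _).trans (ih hl)

theorem recTy_le_empty (σ : Nat → Ty) (I : List Nat) : TySub (recTy σ I) .empty := by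
  cases I with
  | nil => exact .refl _
  | cons l I => exact (recTy_le_fld List.mem_cons_self).trans (.fld_empty l _)

theorem le_recTy {ρ : Ty} (hρ : TySub ρ .empty) :
    ∀ {I : List Nat}, (∀ l ∈ I, TySub ρ (.fld l (σ l))) → TySub ρ (recTy σ I)
  | [], _ => hρ
  | l :: I, h =>
    (TySub.le_inter (h l List.mem_cons_self)
      (le_recTy hρ fun l' hl' => h l' (List.mem_cons_of_mem l hl'))).trans (recTy_cons σ l I).2

def interFld (σ τ : Nat → Ty) (I J : List Nat) (l : Nat) : Ty :=
  if l ∈ I then (if l ∈ J then .inter (σ l) (τ l) else σ l) else τ l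

theorem interFld_le_left {I J : List Nat} {l : Nat} (hl : l ∈ I) :
    TySub (interFld σ τ I J l) (σ l) := by
  unfold interFld
  split_ifs
  · exact .inter_left _ _
  · exact .refl _

theorem interFld_le_right {I J : List Nat} {l : Nat} (hl : l ∈ J) :
    TySub (interFld σ τ I J l) (τ l) := by
  unfold interFld
  split_ifs
  · exact .inter_right _ _
  · exact .refl _

theorem inter_recTy_le_fld {I J : List Nat} {l : Nat} (hl : l ∈ I ∪ J) :
    TySub (.inter (recTy σ I) (recTy τ J)) (.fld l (interFld σ τ I J l)) := by
  unfold interFld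
  split_ifs with hI hJ
  · exact (TySub.inter_mono (recTy_le_fld hI) (recTy_le_fld hJ)).trans (.fld_inter l _ _)
  · exact (TySub.inter_left _ _).trans (recTy_le_fld hI)
  · exact (TySub.inter_right _ _).trans (recTy_le_fld ((List.mem_union_iff.mp hl).resolve_left hI))

theorem inter_recTy_tyEq (σ τ : Nat → Ty) (I J : List Nat) :
    TyEq (.inter (recTy σ I) (recTy τ J)) (recTy (interFld σ τ I J) (I ∪ J)) := by
  refine ⟨le_recTy ((TySub.inter_left _ _).trans (recTy_le_empty σ I))
    fun l hl => inter_recTy_le_fld hl, .le_inter ?_ ?_⟩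
  · refine le_recTy (recTy_le_empty _ _) fun l hl => ?_
    exact (recTy_le_fld (List.mem_union_left hl J)).trans (.fld_mono l (interFld_le_left hl))
  · refine le_recTy (recTy_le_empty _ _) fun l hl => ?_
    exact (recTy_le_fld (List.mem_union_right I hl)).trans (.fld_mono l (interFld_le_right hl))

end recTy

def HasRecNormalForm (ρ : Ty) : Prop :=
  ∃ (I : List Nat) (σ : Nat → Ty), I.Nodup ∧ TyEq ρ (recTy σ I)

theorem hasRecNormalForm_recTy (σ : Nat → Ty) {I : List Nat} (hI : I.Nodup) :
    HasRecNormalForm (recTy σ I) :=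
  ⟨I, σ, hI, .refl _⟩

namespace HasRecNormalForm

theorem fld (l : Nat) (σ : Ty) : HasRecNormalForm (.fld l σ) :=
  ⟨[l], fun _ => σ, List.nodup_singleton l, .refl _⟩

theorem of_tyEq {ρ ρ' : Ty} (e : TyEq ρ ρ') (h : HasRecNormalForm ρ') : HasRecNormalForm ρ :=
  let ⟨I, σ, hI, e'⟩ := h
  ⟨I, σ, hI, e.trans e'⟩

theorem inter {ρ₁ ρ₂ : Ty} (h₁ : HasRecNormalForm ρ₁) (h₂ : HasRecNormalForm ρ₂) :
    HasRecNormalForm (.inter ρ₁ ρ₂) :=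
  let ⟨I, σ, _, e₁⟩ := h₁
  let ⟨J, τ, hJ, e₂⟩ := h₂
  ⟨I ∪ J, interFld σ τ I J, hJ.union I, (e₁.inter e₂).trans (inter_recTy_tyEq σ τ I J)⟩

theorem merge_fld_recTy (l : Nat) (σ : Ty) (τ : Nat → Ty) {J : List Nat} (hJ : J.Nodup) :
    HasRecNormalForm (.merge (.fld l σ) (recTy τ J)) := by
  induction J with
  | nil => exact (fld l σ).of_tyEq ⟨.merge_empty_r (.fld l σ), .merge_empty_r' (.fld l σ)⟩
  | cons l' J ih =>
    have hJ' := isRec_recTy τ J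
    refine of_tyEq (.merge (.fld _ _) (.fld _ _) (isRec_recTy τ _) (.inter (.fld _ _) hJ')
      (.refl _) (recTy_cons τ l' J)) ?_
    by_cases hl : l = l'
    · subst hl
      exact (hasRecNormalForm_recTy τ hJ).of_tyEq
        (TyEq.trans ⟨.fld_absorb l σ (τ l) hJ', .fld_absorb' l σ (τ l) hJ'⟩ (recTy_cons τ l J).symm)
    · exact of_tyEq ⟨.fld_comm σ (τ l') hl hJ', .fld_comm' σ (τ l') hl hJ'⟩
        ((fld l' (τ l')).inter (ih hJ.of_cons))

theorem merge_recTy (σ τ : Nat → Ty) (I : List Nat) {J : List Nat} (hJ : J.Nodup) :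
    HasRecNormalForm (.merge (recTy σ I) (recTy τ J)) := by
  have hJ' := isRec_recTy τ J
  induction I with
  | nil => exact (hasRecNormalForm_recTy τ hJ).of_tyEq ⟨.merge_empty_l hJ', .merge_empty_l' hJ'⟩
  | cons l I ih =>
    have hI' := isRec_recTy σ I
    refine of_tyEq (.merge (isRec_recTy σ _) (.inter (.fld _ _) hI') hJ' hJ'
      (recTy_cons σ l I) (.refl _)) ?_
    exact of_tyEq ⟨.merge_inter (.fld _ _) hI' hJ', .merge_inter' (.fld _ _) hI' hJ'⟩
      ((merge_fld_recTy l (σ l) τ hJ).inter ih)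

theorem merge {ρ₁ ρ₂ : Ty} (hρ₁ : IsRec ρ₁) (hρ₂ : IsRec ρ₂) (h₁ : HasRecNormalForm ρ₁)
    (h₂ : HasRecNormalForm ρ₂) : HasRecNormalForm (.merge ρ₁ ρ₂) :=
  let ⟨I, σ, _, e₁⟩ := h₁
  let ⟨J, τ, hJ, e₂⟩ := h₂
  (merge_recTy σ τ I hJ).of_tyEq
    (.merge hρ₁ (isRec_recTy σ I) hρ₂ (isRec_recTy τ J) e₁ e₂)

end HasRecNormalForm

/-- Every record type is equal (mutual subtyping) to an intersection of unary
record types over a finite set of pairwise distinct labels; hence `+` is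
eliminable up to type equality. -/
theorem record_normal_form (ρ : Ty) (h : IsRec ρ) :
    ∃ (I : List Nat) (σ : Nat → Ty), I.Nodup ∧ TyEq ρ (recTy σ I) := by
  show HasRecNormalForm ρ
  induction h with
  | empty => exact hasRecNormalForm_recTy (fun _ => .omega) List.nodup_nil
  | fld l σ => exact .fld l σ
  | merge h₁ h₂ ih₁ ih₂ => exact .merge h₁ h₂ ih₁ ih₂
  | inter _ _ ih₁ ih₂ => exact ih₁.inter ih₂
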